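/- With the operator Ω as above and F Lipschitz in the second variable with constant L, for any two bounded continuous functions φ₁, φ₂ : ℝ → ℝ^p one has ‖Ωφ₁ - Ωφ₂‖_∞ ≤ √2·N·L·γ^{-1}·‖φ₁ - φ₂‖_∞. In particular, if √2·N·L < γ then Ω is a contraction on the space of bounded continuous functions. -/

import Mathlib

/-!
Each component of `Ωφ₁ - Ωφ₂` is a half-line integral of the evolution operator applied to
`F(s, φ₁ s) - F(s, φ₂ s)`. The dichotomy estimate bounds the operator by `N e^{-γ|t - s|}`, the
Lipschitz condition bounds the difference by `L ‖φ₁ - φ₂‖_∞`, and the exponential weight has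
integral `γ⁻¹`; so each component is at most `N L γ⁻¹ ‖φ₁ - φ₂‖_∞`, and combining the two
components in the Euclidean norm costs the factor `√2`.
-/

open MeasureTheory Set Real

lemma exp_mul_sub_eq (γ t s : ℝ) : exp (γ * (t - s)) = exp (γ * t) * exp (-γ * s) := by
  rw [← Real.exp_add]; ring_nf

section ExponentialWeights

variable {γ : ℝ} (t : ℝ)

lemma integrableOn_exp_mul_sub_Ici (hγ : 0 < γ) :
    IntegrableOn (fun s => exp (γ * (t - s))) (Ici t) := by
  rw [integrableOn_Ici_iff_integrableOn_Ioi]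
  simp_rw [exp_mul_sub_eq]
  exact (integrableOn_exp_mul_Ioi (neg_lt_zero.2 hγ) t).const_mul _

lemma integral_exp_mul_sub_Ici (hγ : 0 < γ) : ∫ s in Ici t, exp (γ * (t - s)) = γ⁻¹ := by
  simp_rw [exp_mul_sub_eq, integral_Ici_eq_integral_Ioi, integral_const_mul,
    integral_exp_mul_Ioi (neg_lt_zero.2 hγ), neg_div_neg_eq, ← mul_div_assoc, ← Real.exp_add,
    neg_mul, add_neg_cancel, Real.exp_zero, one_div]

lemma integrableOn_exp_neg_mul_sub_Iic (hγ : 0 < γ) :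
    IntegrableOn (fun s => exp (-γ * (t - s))) (Iic t) := by
  simp_rw [exp_mul_sub_eq, neg_neg]
  exact (integrableOn_exp_mul_Iic hγ t).const_mul _

lemma integral_exp_neg_mul_sub_Iic (hγ : 0 < γ) : ∫ s in Iic t, exp (-γ * (t - s)) = γ⁻¹ := by
  simp_rw [exp_mul_sub_eq, neg_neg, integral_const_mul, integral_exp_mul_Iic hγ,
    ← mul_div_assoc, ← Real.exp_add, neg_mul, neg_add_cancel, Real.exp_zero, one_div]

end ExponentialWeights

section WeightedOperatorIntegrals

variable {E : Type*} [NormedAddCommGroup E] [NormedSpace ℝ E]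
  {S : Set ℝ} {w : ℝ → ℝ} {A : ℝ → E →L[ℝ] E} {N : ℝ}

lemma integrableOn_clm_apply_of_norm_le (hS : MeasurableSet S) (hw : IntegrableOn w S)
    (hAc : Continuous A) (hA : ∀ s ∈ S, ‖A s‖ ≤ N * w s)
    {f : ℝ → E} {M : ℝ} (hf : Continuous f) (hfM : ∀ s, ‖f s‖ ≤ M) :
    IntegrableOn (fun s => A s (f s)) S := by
  refine (hw.const_mul (N * M)).mono' (hAc.clm_apply hf).aestronglyMeasurable.restrict ?_
  filter_upwards [ae_restrict_mem hS] with s hs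
  calc ‖A s (f s)‖ ≤ N * w s * ‖f s‖ := (A s).le_of_opNorm_le (hA s hs) _
    _ ≤ N * w s * M := by gcongr; exacts [(norm_nonneg _).trans (hA s hs), hfM s]
    _ = N * M * w s := by ring

lemma norm_setIntegral_clm_apply_sub_le [CompleteSpace E] (hS : MeasurableSet S)
    (hw : IntegrableOn w S) (hAc : Continuous A) (hA : ∀ s ∈ S, ‖A s‖ ≤ N * w s)
    {f₁ f₂ : ℝ → E} {M C : ℝ} (hf₁ : Continuous f₁) (hf₂ : Continuous f₂)
    (hf₁M : ∀ s, ‖f₁ s‖ ≤ M) (hf₂M : ∀ s, ‖f₂ s‖ ≤ M) (hC : ∀ s, ‖f₁ s - f₂ s‖ ≤ C) :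
    ‖(∫ s in S, A s (f₁ s)) - ∫ s in S, A s (f₂ s)‖ ≤ N * C * ∫ s in S, w s := by
  rw [← integral_sub (integrableOn_clm_apply_of_norm_le hS hw hAc hA hf₁ hf₁M)
    (integrableOn_clm_apply_of_norm_le hS hw hAc hA hf₂ hf₂M), ← integral_const_mul]
  refine norm_integral_le_of_norm_le (hw.const_mul _) ?_
  filter_upwards [ae_restrict_mem hS] with s hs
  calc ‖A s (f₁ s) - A s (f₂ s)‖ = ‖A s (f₁ s - f₂ s)‖ := by rw [map_sub]
    _ ≤ N * w s * ‖f₁ s - f₂ s‖ := (A s).le_of_opNorm_le (hA s hs) _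
    _ ≤ N * w s * C := by gcongr; exacts [(norm_nonneg _).trans (hA s hs), hC s]
    _ = N * C * w s := by ring

end WeightedOperatorIntegrals

open NormedSpace in
lemma continuous_exp_sub_smul {E : Type*} [NormedAddCommGroup E] [NormedSpace ℝ E]
    [CompleteSpace E] (T : E →L[ℝ] E) (t : ℝ) :
    Continuous fun s : ℝ => exp ((t - s) • T) :=
  (differentiable_exp_smul_const ℝ T).continuous.comp (continuous_const.sub continuous_id)

section Dichotomy

open NormedSpace

variable {E : Type*} [NormedAddCommGroup E] [NormedSpace ℝ E] [CompleteSpace E]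
  (T : E →L[ℝ] E) {N γ M C : ℝ} {f₁ f₂ : ℝ → E}

lemma norm_integral_Ici_exp_smul_apply_sub_le (hγ : 0 < γ)
    (hT : ∀ t : ℝ, t ≤ 0 → ‖exp (t • T)‖ ≤ N * Real.exp (γ * t))
    (hf₁ : Continuous f₁) (hf₂ : Continuous f₂)
    (hf₁M : ∀ s, ‖f₁ s‖ ≤ M) (hf₂M : ∀ s, ‖f₂ s‖ ≤ M) (hC : ∀ s, ‖f₁ s - f₂ s‖ ≤ C) (t : ℝ) :
    ‖(∫ s in Ici t, exp ((t - s) • T) (f₁ s)) - ∫ s in Ici t, exp ((t - s) • T) (f₂ s)‖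
      ≤ N * C * γ⁻¹ := by
  rw [← integral_exp_mul_sub_Ici t hγ]
  exact norm_setIntegral_clm_apply_sub_le measurableSet_Ici (integrableOn_exp_mul_sub_Ici t hγ)
    (continuous_exp_sub_smul T t) (fun s hs => hT _ (sub_nonpos.2 hs)) hf₁ hf₂ hf₁M hf₂M hC

lemma norm_integral_Iic_exp_smul_apply_sub_le (hγ : 0 < γ)
    (hT : ∀ t : ℝ, 0 ≤ t → ‖exp (t • T)‖ ≤ N * Real.exp (-γ * t))
    (hf₁ : Continuous f₁) (hf₂ : Continuous f₂)
    (hf₁M : ∀ s, ‖f₁ s‖ ≤ M) (hf₂M : ∀ s, ‖f₂ s‖ ≤ M) (hC : ∀ s, ‖f₁ s - f₂ s‖ ≤ C) (t : ℝ) :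
    ‖(∫ s in Iic t, exp ((t - s) • T) (f₁ s)) - ∫ s in Iic t, exp ((t - s) • T) (f₂ s)‖
      ≤ N * C * γ⁻¹ := by
  rw [← integral_exp_neg_mul_sub_Iic t hγ]
  exact norm_setIntegral_clm_apply_sub_le measurableSet_Iic
    (integrableOn_exp_neg_mul_sub_Iic t hγ) (continuous_exp_sub_smul T t)
    (fun s hs => hT _ (sub_nonneg.2 hs)) hf₁ hf₂ hf₁M hf₂M hC

end Dichotomy

lemma le_sqrt_sq_add_sq_left (a b : ℝ) : a ≤ √(a ^ 2 + b ^ 2) :=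
  Real.le_sqrt_of_sq_le (le_add_of_nonneg_right (sq_nonneg b))

lemma le_sqrt_sq_add_sq_right (a b : ℝ) : b ≤ √(a ^ 2 + b ^ 2) :=
  Real.le_sqrt_of_sq_le (le_add_of_nonneg_left (sq_nonneg a))

lemma sqrt_sq_add_sq_le_sqrt_two_mul {a b K : ℝ} (ha : 0 ≤ a) (haK : a ≤ K) (hb : 0 ≤ b)
    (hbK : b ≤ K) : √(a ^ 2 + b ^ 2) ≤ √2 * K := by
  have hK : 0 ≤ K := ha.trans haK
  calc √(a ^ 2 + b ^ 2) ≤ √(2 * K ^ 2) := Real.sqrt_le_sqrt (by nlinarith)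
    _ = √2 * K := by rw [Real.sqrt_mul zero_le_two, Real.sqrt_sq hK]

theorem stmt3_general (r q : ℕ)
    (Ap : Matrix (Fin r) (Fin r) ℝ) (Am : Matrix (Fin q) (Fin q) ℝ)
    (N γ M L : ℝ) (hγ : 0 < γ) (hL : 0 < L)
    (hexpP : ∀ t : ℝ, t ≤ 0 →
      ‖NormedSpace.exp (t • (Matrix.toEuclideanCLM (𝕜 := ℝ) Ap))‖ ≤ N * Real.exp (γ * t))
    (hexpM : ∀ t : ℝ, 0 ≤ t →
      ‖NormedSpace.exp (t • (Matrix.toEuclideanCLM (𝕜 := ℝ) Am))‖ ≤ N * Real.exp (-γ * t))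
    (Fp : ℝ → EuclideanSpace ℝ (Fin r) × EuclideanSpace ℝ (Fin q) → EuclideanSpace ℝ (Fin r))
    (Fm : ℝ → EuclideanSpace ℝ (Fin r) × EuclideanSpace ℝ (Fin q) → EuclideanSpace ℝ (Fin q))
    (hFc : Continuous (Function.uncurry fun t x => (Fp t x, Fm t x)))
    (hFbound : ∀ t x, Real.sqrt (‖Fp t x‖ ^ 2 + ‖Fm t x‖ ^ 2) ≤ M)
    (hFlip : ∀ t x y, Real.sqrt (‖Fp t x - Fp t y‖ ^ 2 + ‖Fm t x - Fm t y‖ ^ 2)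
        ≤ L * Real.sqrt (‖x.1 - y.1‖ ^ 2 + ‖x.2 - y.2‖ ^ 2))
    (φ₁p φ₂p : ℝ → EuclideanSpace ℝ (Fin r)) (φ₁m φ₂m : ℝ → EuclideanSpace ℝ (Fin q))
    (hφ₁c : Continuous φ₁p ∧ Continuous φ₁m) (hφ₂c : Continuous φ₂p ∧ Continuous φ₂m)
    (D : ℝ)
    (hD : ∀ t, Real.sqrt (‖φ₁p t - φ₂p t‖ ^ 2 + ‖φ₁m t - φ₂m t‖ ^ 2) ≤ D)
    (Ω₁p Ω₂p : ℝ → EuclideanSpace ℝ (Fin r)) (Ω₁m Ω₂m : ℝ → EuclideanSpace ℝ (Fin q))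
    (hΩ₁p : ∀ t, Ω₁p t = - ∫ s in Set.Ici t,
      NormedSpace.exp ((t - s) • (Matrix.toEuclideanCLM (𝕜 := ℝ) Ap)) (Fp s (φ₁p s, φ₁m s)))
    (hΩ₁m : ∀ t, Ω₁m t = ∫ s in Set.Iic t,
      NormedSpace.exp ((t - s) • (Matrix.toEuclideanCLM (𝕜 := ℝ) Am)) (Fm s (φ₁p s, φ₁m s)))
    (hΩ₂p : ∀ t, Ω₂p t = - ∫ s in Set.Ici t,
      NormedSpace.exp ((t - s) • (Matrix.toEuclideanCLM (𝕜 := ℝ) Ap)) (Fp s (φ₂p s, φ₂m s)))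
    (hΩ₂m : ∀ t, Ω₂m t = ∫ s in Set.Iic t,
      NormedSpace.exp ((t - s) • (Matrix.toEuclideanCLM (𝕜 := ℝ) Am)) (Fm s (φ₂p s, φ₂m s))) :
    ∀ t, Real.sqrt (‖Ω₁p t - Ω₂p t‖ ^ 2 + ‖Ω₁m t - Ω₂m t‖ ^ 2)
      ≤ Real.sqrt 2 * N * L * γ⁻¹ * D := by
  intro t
  have hG₁ : Continuous fun s => (Fp s (φ₁p s, φ₁m s), Fm s (φ₁p s, φ₁m s)) :=
    hFc.comp (continuous_id.prodMk (hφ₁c.1.prodMk hφ₁c.2))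
  have hG₂ : Continuous fun s => (Fp s (φ₂p s, φ₂m s), Fm s (φ₂p s, φ₂m s)) :=
    hFc.comp (continuous_id.prodMk (hφ₂c.1.prodMk hφ₂c.2))
  have hFpM s x : ‖Fp s x‖ ≤ M := (le_sqrt_sq_add_sq_left _ _).trans (hFbound s x)
  have hFmM s x : ‖Fm s x‖ ≤ M := (le_sqrt_sq_add_sq_right _ _).trans (hFbound s x)
  have hFφ s : √(‖Fp s (φ₁p s, φ₁m s) - Fp s (φ₂p s, φ₂m s)‖ ^ 2
      + ‖Fm s (φ₁p s, φ₁m s) - Fm s (φ₂p s, φ₂m s)‖ ^ 2) ≤ L * D :=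
    (hFlip s _ _).trans (mul_le_mul_of_nonneg_left (hD s) hL.le)
  have hp : ‖Ω₁p t - Ω₂p t‖ ≤ N * (L * D) * γ⁻¹ := by
    rw [hΩ₁p, hΩ₂p, neg_sub_neg, norm_sub_rev]
    exact norm_integral_Ici_exp_smul_apply_sub_le _ hγ hexpP hG₁.fst hG₂.fst
      (fun s => hFpM s _) (fun s => hFpM s _)
      (fun s => (le_sqrt_sq_add_sq_left _ _).trans (hFφ s)) t
  have hm : ‖Ω₁m t - Ω₂m t‖ ≤ N * (L * D) * γ⁻¹ := by
    rw [hΩ₁m, hΩ₂m]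
    exact norm_integral_Iic_exp_smul_apply_sub_le _ hγ hexpM hG₁.snd hG₂.snd
      (fun s => hFmM s _) (fun s => hFmM s _)
      (fun s => (le_sqrt_sq_add_sq_right _ _).trans (hFφ s)) t
  calc _ ≤ √2 * (N * (L * D) * γ⁻¹) :=
        sqrt_sq_add_sq_le_sqrt_two_mul (norm_nonneg _) hp (norm_nonneg _) hm
    _ = √2 * N * L * γ⁻¹ * D := by ring

/-- Contraction estimate for the operator Ω: for bounded continuous φ₁, φ₂,
`‖Ωφ₁ − Ωφ₂‖_∞ ≤ √2·N·L·γ⁻¹·‖φ₁ − φ₂‖_∞`; in particular Ω is a contraction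
when `√2·N·L < γ`. -/
theorem stmt3 (r q : ℕ)
    (Ap : Matrix (Fin r) (Fin r) ℝ) (Am : Matrix (Fin q) (Fin q) ℝ)
    (N γ M L : ℝ) (hN : 1 ≤ N) (hγ : 0 < γ) (hM : 0 < M) (hL : 0 < L)
    (hexpP : ∀ t : ℝ, t ≤ 0 →
      ‖NormedSpace.exp (t • (Matrix.toEuclideanCLM (𝕜 := ℝ) Ap))‖ ≤ N * Real.exp (γ * t))
    (hexpM : ∀ t : ℝ, 0 ≤ t →
      ‖NormedSpace.exp (t • (Matrix.toEuclideanCLM (𝕜 := ℝ) Am))‖ ≤ N * Real.exp (-γ * t))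
    (Fp : ℝ → EuclideanSpace ℝ (Fin r) × EuclideanSpace ℝ (Fin q) → EuclideanSpace ℝ (Fin r))
    (Fm : ℝ → EuclideanSpace ℝ (Fin r) × EuclideanSpace ℝ (Fin q) → EuclideanSpace ℝ (Fin q))
    (hFc : Continuous (Function.uncurry fun t x => (Fp t x, Fm t x)))
    (hFbound : ∀ t x, Real.sqrt (‖Fp t x‖ ^ 2 + ‖Fm t x‖ ^ 2) ≤ M)
    (hFlip : ∀ t x y, Real.sqrt (‖Fp t x - Fp t y‖ ^ 2 + ‖Fm t x - Fm t y‖ ^ 2)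
        ≤ L * Real.sqrt (‖x.1 - y.1‖ ^ 2 + ‖x.2 - y.2‖ ^ 2))
    (φ₁p φ₂p : ℝ → EuclideanSpace ℝ (Fin r)) (φ₁m φ₂m : ℝ → EuclideanSpace ℝ (Fin q))
    (hφ₁c : Continuous φ₁p ∧ Continuous φ₁m) (hφ₂c : Continuous φ₂p ∧ Continuous φ₂m)
    (C₁ C₂ : ℝ)
    (hφ₁b : ∀ t, Real.sqrt (‖φ₁p t‖ ^ 2 + ‖φ₁m t‖ ^ 2) ≤ C₁)
    (hφ₂b : ∀ t, Real.sqrt (‖φ₂p t‖ ^ 2 + ‖φ₂m t‖ ^ 2) ≤ C₂)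
    (D : ℝ)
    (hD : ∀ t, Real.sqrt (‖φ₁p t - φ₂p t‖ ^ 2 + ‖φ₁m t - φ₂m t‖ ^ 2) ≤ D)
    (Ω₁p Ω₂p : ℝ → EuclideanSpace ℝ (Fin r)) (Ω₁m Ω₂m : ℝ → EuclideanSpace ℝ (Fin q))
    (hΩ₁p : ∀ t, Ω₁p t = - ∫ s in Set.Ici t,
      NormedSpace.exp ((t - s) • (Matrix.toEuclideanCLM (𝕜 := ℝ) Ap)) (Fp s (φ₁p s, φ₁m s)))
    (hΩ₁m : ∀ t, Ω₁m t = ∫ s in Set.Iic t,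
      NormedSpace.exp ((t - s) • (Matrix.toEuclideanCLM (𝕜 := ℝ) Am)) (Fm s (φ₁p s, φ₁m s)))
    (hΩ₂p : ∀ t, Ω₂p t = - ∫ s in Set.Ici t,
      NormedSpace.exp ((t - s) • (Matrix.toEuclideanCLM (𝕜 := ℝ) Ap)) (Fp s (φ₂p s, φ₂m s)))
    (hΩ₂m : ∀ t, Ω₂m t = ∫ s in Set.Iic t,
      NormedSpace.exp ((t - s) • (Matrix.toEuclideanCLM (𝕜 := ℝ) Am)) (Fm s (φ₂p s, φ₂m s))) :
    ∀ t, Real.sqrt (‖Ω₁p t - Ω₂p t‖ ^ 2 + ‖Ω₁m t - Ω₂m t‖ ^ 2)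
      ≤ Real.sqrt 2 * N * L * γ⁻¹ * D :=
  stmt3_general r q Ap Am N γ M L hγ hL hexpP hexpM Fp Fm hFc hFbound hFlip φ₁p φ₂p φ₁m φ₂m hφ₁c
    hφ₂c D hD Ω₁p Ω₂p Ω₁m Ω₂m hΩ₁p hΩ₁m hΩ₂p hΩ₂m
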